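/- For every integer d ≥ 1, every Schwartz function f ∈ 𝒮(ℝ^d; ℂ), every h > 0 and every ξ₀ ∈ ℝ^d \ {0}, the non-linear non-local integro-differential equation (d/dt) ξ^(h)(t) = 𝓕^(h)(ξ^(h))(t) with initial condition ξ^(h)(0) = ξ₀ admits a unique solution ξ^(h) in C¹([0,∞); ℝ^d). -/

import Mathlib

open MeasureTheory Filter Set
open scoped RealInnerProductSpace Topology ENNReal

noncomputable section

abbrev E (d : ℕ) := EuclideanSpace ℝ (Fin d)

/-- `g(η) = η |f(η)|²`. -/
def gfun {d : ℕ} (f : SchwartzMap (E d) ℂ) (η : E d) : E d := ‖f η‖ ^ 2 • η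

/-- the average `⨍_a^b u(σ) dσ`. -/
def intAvg {d : ℕ} (u : ℝ → E d) (a b : ℝ) : E d := (b - a)⁻¹ • ∫ σ in a..b, u σ

/-- `𝓕^(h)(u)(t)`; since `g` is real-valued, taking the real part of the complex
integral amounts to replacing `e^{-irθ}` by `cos (rθ)`. -/
def calF {d : ℕ} (f : SchwartzMap (E d) ℂ) (h : ℝ) (u : ℝ → E d) (t : ℝ) : E d :=
  (-2 : ℝ) • ∫ η, (∫ r in (0:ℝ)..(t / h),
    Real.cos (r * (‖η‖ ^ 2 - 2 * ⟪η, intAvg u (t - h * r) t⟫))) • gfun f η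

/-- A solution of the equation `ξ' = 𝓕^(h)(ξ)`, `ξ 0 = ξ₀`, of class `C¹` on `[0,∞)`. -/
def IsSolutionH {d : ℕ} (f : SchwartzMap (E d) ℂ) (h : ℝ) (ξ₀ : E d) (ξ : ℝ → E d) : Prop :=
  ξ 0 = ξ₀ ∧ (∀ t ∈ Set.Ici (0 : ℝ), HasDerivWithinAt ξ (calF f h ξ t) (Set.Ici (0 : ℝ)) t) ∧
    ContinuousOn (fun t => calF f h ξ t) (Set.Ici (0 : ℝ))

/-!
For `t ≥ 0`, `𝓕^(h)(u)(t)` depends only on `u` on `[0, t]`, and it is Lipschitz in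
`sup_{[0,t]} ‖u - v‖` with constant `2 (t/h)² ∫ ‖η‖² ‖f η‖² dη`: the cosine is 1-Lipschitz and
`r ⨍_{t-hr}^t u` moves by at most `r` times that sup. So the equation is the Volterra integral
equation `ξ = ξ₀ + ∫₀ᵗ 𝓕^(h)(ξ)`, whose Picard operator on `C([0, T])` has `n`-th iterate
Lipschitz with constant `(LT)ⁿ / n!`, hence a contraction for large `n`. The unique fixed points
on the intervals `[0, n]` are compatible and glue to the unique solution on `[0, ∞)`.
-/

section Volterra

variable {V : Type*} [NormedAddCommGroup V]

def LipschitzOnPast (F : C(ℝ, V) → C(ℝ, V)) (T L : ℝ) : Prop :=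
  ∀ u v : C(ℝ, V), ∀ t ∈ Icc 0 T, ∀ M : ℝ, (∀ s ∈ Icc 0 t, ‖u s - v s‖ ≤ M) →
    ‖F u t - F v t‖ ≤ L * M

variable {F : C(ℝ, V) → C(ℝ, V)} {T L : ℝ}

namespace LipschitzOnPast

lemma nonneg (hF : LipschitzOnPast F T L) (hT : 0 ≤ T) : 0 ≤ L := by
  simpa using hF 0 0 0 ⟨le_rfl, hT⟩ 1 (by simp)

lemma apply_eq (hF : LipschitzOnPast F T L) {u v : C(ℝ, V)} {t : ℝ} (ht : t ∈ Icc 0 T)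
    (huv : EqOn u v (Icc 0 t)) : F u t = F v t := by
  have := hF u v t ht 0 fun s hs => by simp [huv hs]
  rwa [mul_zero, norm_le_zero_iff, sub_eq_zero] at this

end LipschitzOnPast

variable [NormedSpace ℝ V] {x₀ : V}

def IsIntegralSolutionOn (F : C(ℝ, V) → C(ℝ, V)) (x₀ : V) (u : C(ℝ, V)) (s : Set ℝ) : Prop :=
  ∀ t ∈ s, u t = x₀ + ∫ τ in (0 : ℝ)..t, F u τ

lemma IsIntegralSolutionOn.mono {u : C(ℝ, V)} {s s' : Set ℝ}
    (hu : IsIntegralSolutionOn F x₀ u s) (hs : s' ⊆ s) : IsIntegralSolutionOn F x₀ u s' :=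
  fun t ht => hu t (hs ht)

def picardMap (F : C(ℝ, V) → C(ℝ, V)) (x₀ : V) {T : ℝ} (hT : 0 ≤ T) (w : C(Icc 0 T, V)) :
    C(Icc 0 T, V) where
  toFun s := x₀ + ∫ τ in (0 : ℝ)..s, F (w.IccExtend hT) τ
  continuous_toFun := continuous_const.add <|
    (intervalIntegral.continuous_primitive
      (fun _ _ => (F _).continuous.intervalIntegrable _ _) 0).comp continuous_subtype_val

namespace LipschitzOnPast

lemma dist_picardMap_le (hF : LipschitzOnPast F T L) (hT : 0 ≤ T) {w₁ w₂ : C(Icc 0 T, V)}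
    {K : ℝ} (hK : 0 ≤ K) (n : ℕ) (hw : ∀ s : Icc 0 T, dist (w₁ s) (w₂ s) ≤ K * (s : ℝ) ^ n)
    (s : Icc 0 T) :
    dist (picardMap F x₀ hT w₁ s) (picardMap F x₀ hT w₂ s) ≤
      L * K * (s : ℝ) ^ (n + 1) / (n + 1) := by
  have hs : (0 : ℝ) ≤ s := s.2.1
  have hbound : ∀ τ ∈ Ioc (0 : ℝ) s,
      ‖F (w₁.IccExtend hT) τ - F (w₂.IccExtend hT) τ‖ ≤ L * K * τ ^ n := by
    intro τ hτ
    rw [mul_assoc]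
    refine hF _ _ τ ⟨hτ.1.le, hτ.2.trans s.2.2⟩ _ fun σ hσ => ?_
    have hσT : σ ∈ Icc 0 T := ⟨hσ.1, hσ.2.trans (hτ.2.trans s.2.2)⟩
    simp only [ContinuousMap.coe_IccExtend, IccExtend_of_mem _ _ hσT, ← dist_eq_norm]
    exact (hw ⟨σ, hσT⟩).trans (by gcongr; exacts [hσ.1, hσ.2])
  calc dist (picardMap F x₀ hT w₁ s) (picardMap F x₀ hT w₂ s)
      = ‖∫ τ in (0 : ℝ)..s, (F (w₁.IccExtend hT) τ - F (w₂.IccExtend hT) τ)‖ := by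
        rw [dist_eq_norm, intervalIntegral.integral_sub ((F _).continuous.intervalIntegrable _ _)
          ((F _).continuous.intervalIntegrable _ _)]
        simp only [picardMap, ContinuousMap.coe_mk, add_sub_add_left_eq_sub]
    _ ≤ ∫ τ in (0 : ℝ)..s, L * K * τ ^ n :=
        intervalIntegral.norm_integral_le_of_norm_le hs (Eventually.of_forall hbound)
          (Continuous.intervalIntegrable (by fun_prop) _ _)
    _ = L * K * (s : ℝ) ^ (n + 1) / (n + 1) := by
        rw [intervalIntegral.integral_const_mul, integral_pow, zero_pow n.succ_ne_zero, sub_zero]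
        ring

lemma dist_picardMap_iterate_le (hF : LipschitzOnPast F T L) (hT : 0 ≤ T)
    (w₁ w₂ : C(Icc 0 T, V)) (n : ℕ) (s : Icc 0 T) :
    dist ((picardMap F x₀ hT)^[n] w₁ s) ((picardMap F x₀ hT)^[n] w₂ s) ≤
      L ^ n / n.factorial * dist w₁ w₂ * (s : ℝ) ^ n := by
  induction n generalizing s with
  | zero => simpa using ContinuousMap.dist_apply_le_dist s
  | succ n ih =>
    have hL := hF.nonneg hT
    rw [Function.iterate_succ_apply', Function.iterate_succ_apply']
    refine (hF.dist_picardMap_le hT (by positivity) n ih s).trans_eq ?_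
    push_cast [Nat.factorial_succ]
    field_simp
    ring

lemma existsUnique_isFixedPt_picardMap [CompleteSpace V] (hF : LipschitzOnPast F T L)
    (hT : 0 ≤ T) : ∃! w, Function.IsFixedPt (picardMap F x₀ hT) w := by
  have hL := hF.nonneg hT
  obtain ⟨n, hn⟩ : ∃ n : ℕ, (L * T) ^ n / n.factorial < 1 :=
    ((FloorSemiring.tendsto_pow_div_factorial_atTop (L * T)).eventually
      (gt_mem_nhds one_pos)).exists
  set K : NNReal := ⟨(L * T) ^ n / n.factorial, by positivity⟩
  have hcontr : ContractingWith K (picardMap F x₀ hT)^[n] := by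
    refine ⟨hn, LipschitzWith.of_dist_le_mul fun w₁ w₂ => ?_⟩
    refine (ContinuousMap.dist_le (by positivity)).2 fun s => ?_
    refine (hF.dist_picardMap_iterate_le hT w₁ w₂ n s).trans ?_
    have : L ^ n * (s : ℝ) ^ n ≤ (L * T) ^ n := by
      rw [← mul_pow]; gcongr; exacts [mul_nonneg hL s.2.1, s.2.2]
    calc L ^ n / n.factorial * dist w₁ w₂ * (s : ℝ) ^ n
        = L ^ n * (s : ℝ) ^ n / n.factorial * dist w₁ w₂ := by ring
      _ ≤ (L * T) ^ n / n.factorial * dist w₁ w₂ := by gcongr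
  have : Nonempty C(Icc 0 T, V) := ⟨0⟩
  exact ⟨_, hcontr.isFixedPt_fixedPoint_iterate,
    fun w hw => hcontr.fixedPoint_unique (hw.iterate n)⟩

lemma isFixedPt_restrict (hF : LipschitzOnPast F T L) (hT : 0 ≤ T) {u : C(ℝ, V)}
    (hu : IsIntegralSolutionOn F x₀ u (Icc 0 T)) :
    Function.IsFixedPt (picardMap F x₀ hT) (u.restrict (Icc 0 T)) := by
  ext s
  refine Eq.trans ?_ (hu s s.2).symm
  simp only [picardMap, ContinuousMap.coe_mk]
  congr 1
  refine intervalIntegral.integral_congr fun τ hτ => ?_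
  rw [uIcc_of_le s.2.1] at hτ
  refine hF.apply_eq ⟨hτ.1, hτ.2.trans s.2.2⟩ fun σ hσ => ?_
  have hσT : σ ∈ Icc 0 T := ⟨hσ.1, hσ.2.trans (hτ.2.trans s.2.2)⟩
  simp [IccExtend_of_mem _ _ hσT]

lemma eqOn_of_isIntegralSolutionOn [CompleteSpace V] (hF : LipschitzOnPast F T L)
    {u v : C(ℝ, V)} (hu : IsIntegralSolutionOn F x₀ u (Icc 0 T))
    (hv : IsIntegralSolutionOn F x₀ v (Icc 0 T)) : EqOn u v (Icc 0 T) := by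
  intro t ht
  have hT : 0 ≤ T := ht.1.trans ht.2
  have := (hF.existsUnique_isFixedPt_picardMap hT).unique (hF.isFixedPt_restrict hT hu)
    (hF.isFixedPt_restrict hT hv)
  exact congr($this ⟨t, ht⟩)

end LipschitzOnPast

lemma isIntegralSolutionOn_IccExtend (hT : 0 ≤ T) {w : C(Icc 0 T, V)}
    (hw : Function.IsFixedPt (picardMap F x₀ hT) w) :
    IsIntegralSolutionOn F x₀ (w.IccExtend hT) (Icc 0 T) := by
  intro t ht
  conv_lhs => rw [ContinuousMap.coe_IccExtend, IccExtend_of_mem _ _ ht, ← hw]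
  rfl

theorem existsUnique_isIntegralSolutionOn_Ici [CompleteSpace V]
    (hF : ∀ T, ∃ L, LipschitzOnPast F T L) (x₀ : V) :
    ∃ ξ : C(ℝ, V), IsIntegralSolutionOn F x₀ ξ (Ici 0) ∧
      ∀ ζ, IsIntegralSolutionOn F x₀ ζ (Ici 0) → EqOn ζ ξ (Ici 0) := by
  choose L hL using hF
  have hsol (n : ℕ) : ∃ u : C(ℝ, V), IsIntegralSolutionOn F x₀ u (Icc 0 n) :=
    have hn : (0 : ℝ) ≤ n := n.cast_nonneg
    ⟨_, isIntegralSolutionOn_IccExtend hn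
      ((hL n).existsUnique_isFixedPt_picardMap (x₀ := x₀) hn).exists.choose_spec⟩
  choose u hu using hsol
  -- with `max t 0`, `ξ` agrees with `u n ∘ (max · 0)` on all of `(-∞, n]`, so it is continuous
  let ξ (t : ℝ) : V := u ⌈t⌉₊ (max t 0)
  have hξ (n : ℕ) {t : ℝ} (ht : t ≤ n) : ξ t = u n (max t 0) :=
    (hL _).eqOn_of_isIntegralSolutionOn (hu _)
      ((hu n).mono (Icc_subset_Icc_right (by exact_mod_cast Nat.ceil_le.2 ht)))
      ⟨le_max_right _ _, max_le (Nat.le_ceil t) (Nat.cast_nonneg _)⟩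
  have hξ_cont : Continuous ξ := continuous_iff_continuousAt.2 fun t =>
    have ht : t < (⌈t⌉₊ + 1 : ℕ) := by push_cast; linarith [Nat.le_ceil t]
    ((u _).continuous.comp (continuous_id.max continuous_const)).continuousAt.congr
      (eventually_le_nhds ht |>.mono fun s hs => (hξ _ hs).symm)
  have hξ_sol : IsIntegralSolutionOn F x₀ ⟨ξ, hξ_cont⟩ (Ici 0) := by
    intro t (ht : 0 ≤ t)
    have htn : t ≤ ⌈t⌉₊ := Nat.le_ceil t
    have hξu : EqOn (u ⌈t⌉₊) ξ (Icc 0 t) := fun σ hσ => by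
      rw [hξ _ (hσ.2.trans htn), max_eq_left hσ.1]
    rw [ContinuousMap.coe_mk, ← hξu ⟨ht, le_rfl⟩, hu _ t ⟨ht, htn⟩]
    congr 1
    refine intervalIntegral.integral_congr fun τ hτ => ?_
    rw [uIcc_of_le ht] at hτ
    exact (hL _).apply_eq ⟨hτ.1, hτ.2.trans htn⟩ (hξu.mono (Icc_subset_Icc_right hτ.2))
  exact ⟨_, hξ_sol, fun ζ hζ t ht => (hL t).eqOn_of_isIntegralSolutionOn
    (hζ.mono Icc_subset_Ici_self) (hξ_sol.mono Icc_subset_Ici_self) ⟨ht, le_rfl⟩⟩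

lemma eq_add_integral_of_hasDerivWithinAt_Ici [CompleteSpace V] {ζ g : ℝ → V}
    (hζ : ∀ t ∈ Ici 0, HasDerivWithinAt ζ (g t) (Ici 0) t) (hg : ContinuousOn g (Ici 0))
    {t : ℝ} (ht : 0 ≤ t) : ζ t = ζ 0 + ∫ τ in (0 : ℝ)..t, g τ := by
  rw [intervalIntegral.integral_eq_sub_of_hasDeriv_right_of_le ht
    (fun x hx => (hζ x hx.1).continuousWithinAt.mono Icc_subset_Ici_self)
    (fun x hx => (hζ x (le_of_lt hx.1)).mono fun y (hy : x < y) => (hx.1.trans hy).le)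
    ((hg.mono (uIcc_of_le ht ▸ Icc_subset_Ici_self)).intervalIntegrable)]
  abel

lemma hasDerivWithinAt_Ici_of_eq_add_integral [CompleteSpace V] {u g : ℝ → V}
    (hg : Continuous g)
    (hu : ∀ t ∈ Ici 0, u t = x₀ + ∫ τ in (0 : ℝ)..t, g τ) {t : ℝ} (ht : t ∈ Ici 0) :
    HasDerivWithinAt u (g t) (Ici 0) t :=
  ((hg.integral_hasStrictDerivAt 0 t).hasDerivAt.const_add x₀).hasDerivWithinAt.congr hu (hu t ht)

end Volterra

section Estimates

variable {d : ℕ} {h : ℝ} {u v : ℝ → E d}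

lemma norm_gfun (f : SchwartzMap (E d) ℂ) (η : E d) : ‖gfun f η‖ = ‖η‖ * ‖f η‖ ^ 2 := by
  rw [gfun, norm_smul, Real.norm_of_nonneg (by positivity), mul_comm]

lemma integrable_norm_pow_mul_sq (f : SchwartzMap (E d) ℂ) (k : ℕ) :
    Integrable fun η : E d => ‖η‖ ^ k * ‖f η‖ ^ 2 := by
  have := (f.integrable_pow_mul volume k).mul_bdd (c := SchwartzMap.seminorm ℝ 0 0 f)
    f.continuous.norm.aestronglyMeasurable
    (Eventually.of_forall fun η => by simpa using f.norm_le_seminorm ℝ η)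
  simpa [pow_two, mul_assoc] using this

lemma norm_integral_cos_smul_gfun_le (f : SchwartzMap (E d) ℂ) (g : ℝ → ℝ) (b : ℝ) (η : E d) :
    ‖(∫ r in (0 : ℝ)..b, Real.cos (g r)) • gfun f η‖ ≤ |b| * (‖η‖ ^ 1 * ‖f η‖ ^ 2) := by
  rw [norm_smul, norm_gfun, pow_one]
  gcongr
  simpa using intervalIntegral.norm_integral_le_of_norm_le_const (a := 0) (b := b) (C := 1)
    (f := fun r => Real.cos (g r)) fun r _ => Real.abs_cos_le_one (g r)

/-- The phase of `calF`, with `r ⨍_{t-hr}^t u` written as `h⁻¹ ∫_{t-hr}^t u`, so that it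
is continuous in `r` (the average is a junk `0` at `r = 0`). -/
def phase (h : ℝ) (u : ℝ → E d) (t : ℝ) (η : E d) (r : ℝ) : ℝ :=
  r * ‖η‖ ^ 2 - 2 * h⁻¹ * ⟪η, ∫ σ in (t - h * r)..t, u σ⟫

lemma calF_eq_phase (f : SchwartzMap (E d) ℂ) (hh : h ≠ 0) (u : ℝ → E d) (t : ℝ) :
    calF f h u t =
      (-2 : ℝ) • ∫ η, (∫ r in (0 : ℝ)..t / h, Real.cos (phase h u t η r)) • gfun f η := by
  unfold calF
  congr! 4 with η
  refine intervalIntegral.integral_congr fun r _ => ?_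
  rcases eq_or_ne r 0 with rfl | hr
  · simp [phase]
  · rw [phase, intAvg, sub_sub_cancel, inner_smul_right]
    field_simp

lemma continuous_phase (h : ℝ) (hu : Continuous u) :
    Continuous fun p : (ℝ × E d) × ℝ => phase h u p.1.1 p.1.2 p.2 := by
  set P : ℝ → E d := fun b => ∫ σ in (0 : ℝ)..b, u σ
  have hP : Continuous P :=
    intervalIntegral.continuous_primitive (fun a b => hu.intervalIntegrable a b) 0
  have hsub (a b : ℝ) : ∫ σ in a..b, u σ = P b - P a :=
    (intervalIntegral.integral_interval_sub_left (hu.intervalIntegrable _ _)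
      (hu.intervalIntegrable _ _)).symm
  unfold phase
  simp_rw [hsub]
  fun_prop

lemma continuous_integral_cos_phase (h : ℝ) (hu : Continuous u) :
    Continuous fun p : ℝ × E d => ∫ r in (0 : ℝ)..p.1 / h, Real.cos (phase h u p.1 p.2 r) := by
  have : Continuous (Function.uncurry fun (p : ℝ × E d) r => Real.cos (phase h u p.1 p.2 r)) :=
    Real.continuous_cos.comp (continuous_phase h hu)
  exact intervalIntegral.continuous_parametric_intervalIntegral_of_continuous this
    (continuous_fst.div_const h)

lemma continuous_gfun (f : SchwartzMap (E d) ℂ) : Continuous (gfun f) :=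
  (f.continuous.norm.pow 2).smul continuous_id

lemma integrable_integral_cos_phase_smul_gfun (f : SchwartzMap (E d) ℂ) (hu : Continuous u)
    (t : ℝ) :
    Integrable fun η => (∫ r in (0 : ℝ)..t / h, Real.cos (phase h u t η r)) • gfun f η :=
  ((integrable_norm_pow_mul_sq f 1).const_mul |t / h|).mono'
    (((continuous_integral_cos_phase h hu).comp (Continuous.prodMk_right t)).smul
      (continuous_gfun f)).aestronglyMeasurable
    (Eventually.of_forall fun η => norm_integral_cos_smul_gfun_le f _ _ η)

lemma continuous_calF (f : SchwartzMap (E d) ℂ) (hh : 0 < h) (hu : Continuous u) :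
    Continuous (calF f h u) := by
  have hG := continuous_integral_cos_phase h hu
  rw [funext (calF_eq_phase f hh.ne' u)]
  refine (continuous_const : Continuous fun _ : ℝ => (-2 : ℝ)).smul ?_
  refine continuous_iff_continuousAt.2 fun t₀ => ?_
  refine continuousAt_of_dominated
    (bound := fun η => (|t₀| + 1) / h * (‖η‖ ^ 1 * ‖f η‖ ^ 2))
    (Eventually.of_forall fun t => (integrable_integral_cos_phase_smul_gfun f hu t).1) ?_
    ((integrable_norm_pow_mul_sq f 1).const_mul _)
    (Eventually.of_forall fun η =>
      ((hG.comp (continuous_id.prodMk continuous_const : Continuous fun t : ℝ => (t, η))).smul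
        continuous_const).continuousAt)
  filter_upwards [Metric.ball_mem_nhds t₀ one_pos] with t ht
  refine Eventually.of_forall fun η => (norm_integral_cos_smul_gfun_le f _ _ η).trans ?_
  have : |t| ≤ |t₀| + 1 := by
    have := abs_sub_abs_le_abs_sub t t₀
    rw [Metric.mem_ball, Real.dist_eq] at ht
    linarith
  rw [abs_div, abs_of_pos hh]
  gcongr

lemma abs_phase_sub_le (hh : 0 < h) (hu : Continuous u) (hv : Continuous v) {t M : ℝ}
    (huv : ∀ s ∈ Icc 0 t, ‖u s - v s‖ ≤ M) (η : E d) {r : ℝ} (hr : r ∈ Icc 0 (t / h)) :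
    |phase h u t η r - phase h v t η r| ≤ 2 * M * ‖η‖ * r := by
  have hhr : 0 ≤ h * r ∧ h * r ≤ t := ⟨mul_nonneg hh.le hr.1, (le_div_iff₀' hh).1 hr.2⟩
  have hI : ‖∫ σ in (t - h * r)..t, (v σ - u σ)‖ ≤ M * (h * r) := by
    refine (intervalIntegral.norm_integral_le_of_norm_le_const fun σ hσ => ?_).trans_eq
      (by rw [sub_sub_cancel, abs_of_nonneg hhr.1])
    rw [uIoc_of_le (sub_le_self _ hhr.1)] at hσ
    rw [norm_sub_rev]
    exact huv σ ⟨by linarith [hσ.1], hσ.2⟩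
  have hdiff : phase h u t η r - phase h v t η r =
      2 * h⁻¹ * ⟪η, ∫ σ in (t - h * r)..t, (v σ - u σ)⟫ := by
    rw [intervalIntegral.integral_sub (hv.intervalIntegrable _ _) (hu.intervalIntegrable _ _),
      inner_sub_right, phase, phase]
    ring
  calc |phase h u t η r - phase h v t η r|
      ≤ 2 * h⁻¹ * (‖η‖ * (M * (h * r))) := by
        rw [hdiff, abs_mul, abs_of_pos (by positivity)]
        gcongr
        exact (abs_real_inner_le_norm _ _).trans (by gcongr)
    _ = 2 * M * ‖η‖ * r := by field_simp

lemma abs_integral_cos_phase_sub_le (hh : 0 < h) (hu : Continuous u) (hv : Continuous v)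
    {t M : ℝ} (ht : 0 ≤ t) (huv : ∀ s ∈ Icc 0 t, ‖u s - v s‖ ≤ M) (η : E d) :
    |(∫ r in (0 : ℝ)..t / h, Real.cos (phase h u t η r)) -
        ∫ r in (0 : ℝ)..t / h, Real.cos (phase h v t η r)| ≤ M * (t / h) ^ 2 * ‖η‖ := by
  have hcos {w : ℝ → E d} (hw : Continuous w) :
      IntervalIntegrable (fun r => Real.cos (phase h w t η r)) volume 0 (t / h) :=
    (Real.continuous_cos.comp ((continuous_phase h hw).comp
      (Continuous.prodMk_right (t, η)))).intervalIntegrable _ _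
  rw [← intervalIntegral.integral_sub (hcos hu) (hcos hv), ← Real.norm_eq_abs]
  calc _ ≤ ∫ r in (0 : ℝ)..t / h, 2 * M * ‖η‖ * r :=
        intervalIntegral.norm_integral_le_of_norm_le (div_nonneg ht hh.le)
          (Eventually.of_forall fun r hr => (Real.abs_cos_sub_cos_le _ _).trans
            (abs_phase_sub_le hh hu hv huv η ⟨hr.1.le, hr.2⟩))
          (Continuous.intervalIntegrable (by fun_prop) _ _)
    _ = M * (t / h) ^ 2 * ‖η‖ := by
        rw [intervalIntegral.integral_const_mul, integral_id]
        ring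

lemma norm_calF_sub_le (f : SchwartzMap (E d) ℂ) (hh : 0 < h) (hu : Continuous u)
    (hv : Continuous v) {t M : ℝ} (ht : 0 ≤ t) (huv : ∀ s ∈ Icc 0 t, ‖u s - v s‖ ≤ M) :
    ‖calF f h u t - calF f h v t‖ ≤ 2 * (∫ η, ‖η‖ ^ 2 * ‖f η‖ ^ 2) * (t / h) ^ 2 * M := by
  rw [calF_eq_phase f hh.ne', calF_eq_phase f hh.ne', ← smul_sub,
    ← integral_sub (integrable_integral_cos_phase_smul_gfun f hu t)
      (integrable_integral_cos_phase_smul_gfun f hv t), norm_smul]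
  simp_rw [← sub_smul]
  calc ‖(-2 : ℝ)‖ * ‖∫ η, ((∫ r in (0 : ℝ)..t / h, Real.cos (phase h u t η r)) -
          ∫ r in (0 : ℝ)..t / h, Real.cos (phase h v t η r)) • gfun f η‖
      ≤ 2 * ∫ η, M * (t / h) ^ 2 * (‖η‖ ^ 2 * ‖f η‖ ^ 2) := by
        rw [Real.norm_of_nonpos (by norm_num), neg_neg]
        gcongr
        refine norm_integral_le_of_norm_le ((integrable_norm_pow_mul_sq f 2).const_mul _)
          (Eventually.of_forall fun η => ?_)
        rw [norm_smul, norm_gfun, Real.norm_eq_abs]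
        calc _ ≤ M * (t / h) ^ 2 * ‖η‖ * (‖η‖ * ‖f η‖ ^ 2) := by
              gcongr; exact abs_integral_cos_phase_sub_le hh hu hv ht huv η
          _ = M * (t / h) ^ 2 * (‖η‖ ^ 2 * ‖f η‖ ^ 2) := by ring
    _ = _ := by rw [integral_const_mul]; ring

lemma calF_congr (f : SchwartzMap (E d) ℂ) (hh : 0 < h) {t : ℝ} (ht : 0 ≤ t)
    (huv : EqOn u v (Icc 0 t)) : calF f h u t = calF f h v t := by
  unfold calF intAvg
  congr! 4 with η
  refine intervalIntegral.integral_congr fun r hr => ?_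
  rw [uIcc_of_le (div_nonneg ht hh.le)] at hr
  have hhr : 0 ≤ h * r ∧ h * r ≤ t := ⟨mul_nonneg hh.le hr.1, (le_div_iff₀' hh).1 hr.2⟩
  rw [intervalIntegral.integral_congr fun σ hσ => huv ?_]
  rw [uIcc_of_le (sub_le_self _ hhr.1)] at hσ
  exact ⟨by linarith [hσ.1], hσ.2⟩

end Estimates

section Solution

variable {d : ℕ} {f : SchwartzMap (E d) ℂ} {h : ℝ} {ξ₀ : E d}

variable (f) in
def calFCM (hh : 0 < h) (u : C(ℝ, E d)) : C(ℝ, E d) :=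
  ⟨calF f h u, continuous_calF f hh u.continuous⟩

lemma lipschitzOnPast_calFCM (hh : 0 < h) (T : ℝ) :
    LipschitzOnPast (calFCM f hh) T (2 * (∫ η, ‖η‖ ^ 2 * ‖f η‖ ^ 2) * (T / h) ^ 2) := by
  intro u v t ht M huv
  have hM : 0 ≤ M := (norm_nonneg _).trans (huv 0 ⟨le_rfl, ht.1⟩)
  have hC : 0 ≤ ∫ η, ‖η‖ ^ 2 * ‖f η‖ ^ 2 := integral_nonneg fun η => by positivity
  refine (norm_calF_sub_le f hh u.continuous v.continuous ht.1 huv).trans ?_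
  gcongr
  exacts [div_nonneg ht.1 hh.le, ht.2]

lemma isSolutionH_of_isIntegralSolutionOn (hh : 0 < h) {ξ : C(ℝ, E d)}
    (hξ : IsIntegralSolutionOn (calFCM f hh) ξ₀ ξ (Ici 0)) : IsSolutionH f h ξ₀ ξ :=
  ⟨by simpa using hξ 0 self_mem_Ici,
    fun _ => hasDerivWithinAt_Ici_of_eq_add_integral (continuous_calF f hh ξ.continuous) hξ,
    (continuous_calF f hh ξ.continuous).continuousOn⟩

lemma IsSolutionH.exists_isIntegralSolutionOn (hh : 0 < h) {ζ : ℝ → E d}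
    (hζ : IsSolutionH f h ξ₀ ζ) :
    ∃ ζ' : C(ℝ, E d), EqOn ζ' ζ (Ici 0) ∧ IsIntegralSolutionOn (calFCM f hh) ξ₀ ζ' (Ici 0) := by
  obtain ⟨hζ₀, hζ_deriv, hζ_cont⟩ := hζ
  let ζ' : C(ℝ, E d) := ⟨fun t => ζ (max t 0), ContinuousOn.comp_continuous
    (fun t ht => (hζ_deriv t ht).continuousWithinAt) (continuous_id.max continuous_const)
    fun t => le_max_right t 0⟩
  have hζ' : EqOn ζ' ζ (Ici 0) := fun t (ht : 0 ≤ t) => congrArg ζ (max_eq_left ht)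
  refine ⟨ζ', hζ', fun t (ht : 0 ≤ t) => ?_⟩
  rw [hζ' ht, eq_add_integral_of_hasDerivWithinAt_Ici hζ_deriv hζ_cont ht, hζ₀]
  congr 1
  refine intervalIntegral.integral_congr fun τ hτ => ?_
  rw [uIcc_of_le ht] at hτ
  exact calF_congr f hh hτ.1 fun σ hσ => (hζ' hσ.1).symm

end Solution

theorem statement0_general (d : ℕ) (f : SchwartzMap (E d) ℂ) (h : ℝ) (hh : 0 < h)
    (ξ₀ : E d) :
    ∃ ξ : ℝ → E d, IsSolutionH f h ξ₀ ξ ∧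
      ∀ ζ : ℝ → E d, IsSolutionH f h ξ₀ ζ → Set.EqOn ζ ξ (Set.Ici (0 : ℝ)) := by
  obtain ⟨ξ, hξ, huniq⟩ :=
    existsUnique_isIntegralSolutionOn_Ici (fun T => ⟨_, lipschitzOnPast_calFCM (f := f) hh T⟩) ξ₀
  refine ⟨ξ, isSolutionH_of_isIntegralSolutionOn hh hξ, fun ζ hζ t ht => ?_⟩
  obtain ⟨ζ', hζζ', hζ'⟩ := hζ.exists_isIntegralSolutionOn hh
  exact (hζζ' ht).symm.trans (huniq ζ' hζ' ht)

/-- for every `d ≥ 1`, `f` Schwartz, `h > 0` and `ξ₀ ≠ 0`, the equation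
`(d/dt) ξ^(h) = 𝓕^(h)(ξ^(h))`, `ξ^(h)(0) = ξ₀` has a unique solution in `C¹([0,∞); ℝ^d)`. -/
theorem statement0 (d : ℕ) (hd : 1 ≤ d) (f : SchwartzMap (E d) ℂ) (h : ℝ) (hh : 0 < h)
    (ξ₀ : E d) (hξ₀ : ξ₀ ≠ 0) :
    ∃ ξ : ℝ → E d, IsSolutionH f h ξ₀ ξ ∧
      ∀ ζ : ℝ → E d, IsSolutionH f h ξ₀ ζ → Set.EqOn ζ ξ (Set.Ici (0 : ℝ)) :=
  statement0_general d f h hh ξ₀
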